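/- arXiv:1307.5817 — 6 statements merged into one kernel-verified Lean document; each statement's English description precedes it below -/
import Mathlib

section
/- The space l_∞(r,s,t,p;B) = {x ∈ w : A(r,s,t;B)x ∈ l_∞(p)} is a complete linear metric space with paranorm h(x) = sup_n |(A(r,s,t;B)x)_n|^{p_n/M}, provided inf_k p_k > 0. -/
/-!
The matrix `A(r,s,t;B)` is lower triangular with diagonal entries `s₀ tₙ u / rₙ ≠ 0`, so it is a
linear bijection of `w`. The space `l_∞(r,s,t,p;B)` is its preimage of Maddox's space `l_∞(p)`
and `h` is the pullback of the paranorm `g(y) = supₙ |yₙ|^{pₙ/M}` of `l_∞(p)`, so all claims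
transfer from `l_∞(p)`. There, with `qₙ = pₙ/M ∈ (0,1]`, subadditivity of `g` comes from
`(a + b)^q ≤ a^q + b^q`, continuity of scalar multiplication from `qₙ ≥ inf p / M > 0`, and
completeness from completeness of the coordinates together with a uniform Cauchy estimate.
-/

open Filter Finset Topology

/-- The `A(r,s,t;B)`-transform: `(A(r,s,t)·B(u,v) x)_n`. -/
noncomputable def GmB (r s t : ℕ → ℂ) (u v : ℂ) (x : ℕ → ℂ) (n : ℕ) : ℂ :=
  (r n)⁻¹ * ((∑ k ∈ Finset.range n, (s (n - k) * t k * u + s (n - k - 1) * t (k + 1) * v) * x k)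
    + s 0 * t n * u * x n)

structure IsCompleteParanormedSubspace (𝕜 : Type*) {V : Type*} [NormedField 𝕜] [AddCommGroup V]
    [Module 𝕜 V] (X : Set V) (h : V → ℝ) : Prop where
  add_mem : ∀ x ∈ X, ∀ y ∈ X, x + y ∈ X
  smul_mem : ∀ (c : 𝕜), ∀ x ∈ X, c • x ∈ X
  map_zero : h 0 = 0
  map_neg : ∀ x, h (-x) = h x
  add_le : ∀ x ∈ X, ∀ y ∈ X, h (x + y) ≤ h x + h y
  tendsto_smul : ∀ (α : ℕ → 𝕜) (a : 𝕜) (xs : ℕ → V) (x : V), (∀ m, xs m ∈ X) → x ∈ X →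
    Tendsto α atTop (𝓝 a) → Tendsto (fun m => h (xs m - x)) atTop (𝓝 0) →
    Tendsto (fun m => h (α m • xs m - a • x)) atTop (𝓝 0)
  complete : ∀ xs : ℕ → V, (∀ m, xs m ∈ X) →
    (∀ ε > (0 : ℝ), ∃ N, ∀ m ≥ N, ∀ l ≥ N, h (xs m - xs l) < ε) →
    ∃ x ∈ X, Tendsto (fun m => h (xs m - x)) atTop (𝓝 0)

namespace IsCompleteParanormedSubspace

variable {𝕜 V W : Type*} [NormedField 𝕜] [AddCommGroup V] [Module 𝕜 V] [AddCommGroup W]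
  [Module 𝕜 W]

theorem comap {Y : Set V} {g : V → ℝ} (hY : IsCompleteParanormedSubspace 𝕜 Y g)
    {T : W →ₗ[𝕜] V} (hT : Function.Surjective T) :
    IsCompleteParanormedSubspace 𝕜 (T ⁻¹' Y) (g ∘ T) where
  add_mem x hx y hy := by simpa using hY.add_mem _ hx _ hy
  smul_mem c x hx := by simpa using hY.smul_mem c _ hx
  map_zero := by simpa using hY.map_zero
  map_neg x := by simpa using hY.map_neg (T x)
  add_le x hx y hy := by simpa using hY.add_le _ hx _ hy
  tendsto_smul α a xs x hxs hx hα hlim := by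
    simpa using hY.tendsto_smul α a (T ∘ xs) (T x) hxs hx hα (by simpa using hlim)
  complete xs hxs hcauchy := by
    obtain ⟨y, hy, hlim⟩ := hY.complete (T ∘ xs) hxs (by simpa using hcauchy)
    obtain ⟨x, rfl⟩ := hT y
    exact ⟨x, hy, by simpa using hlim⟩

end IsCompleteParanormedSubspace

section Rpow

variable {ι : Type*}

lemma bddAbove_range_rpow_iff {f : ι → ℝ} (hf : ∀ i, 0 ≤ f i) {c : ℝ} (hc : 0 < c) :
    BddAbove (Set.range fun i => f i ^ c) ↔ BddAbove (Set.range f) := by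
  constructor
  · rintro ⟨C, hC⟩
    refine ⟨C ^ c⁻¹, Set.forall_mem_range.2 fun i => ?_⟩
    rw [← Real.rpow_rpow_inv (hf i) hc.ne']
    exact Real.rpow_le_rpow (Real.rpow_nonneg (hf i) c) (hC (Set.mem_range_self i))
      (inv_nonneg.2 hc.le)
  · rintro ⟨C, hC⟩
    exact ⟨C ^ c, Set.forall_mem_range.2 fun i =>
      Real.rpow_le_rpow (hf i) (hC (Set.mem_range_self i)) hc.le⟩

lemma rpow_le_max_one {a q : ℝ} (ha : 0 ≤ a) (hq0 : 0 ≤ q) (hq1 : q ≤ 1) : a ^ q ≤ max a 1 := by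
  rcases le_total a 1 with ha1 | ha1
  · exact (Real.rpow_le_one ha ha1 hq0).trans (le_max_right _ _)
  · exact (Real.rpow_le_self_of_one_le ha1 hq1).trans (le_max_left _ _)

end Rpow

section VarLInfty

variable {ι 𝕜 E : Type*} [NormedField 𝕜] [SeminormedAddCommGroup E] [NormedSpace 𝕜 E]

/-- Maddox's space `l_∞(q)`. -/
def varLInfty (q : ι → ℝ) : Set (ι → E) := {y | BddAbove (Set.range fun n => ‖y n‖ ^ q n)}

/-- Real `iSup` is `0` on unbounded families, so this is only meaningful on `varLInfty q`. -/
noncomputable def supRpow (q : ι → ℝ) (y : ι → E) : ℝ := ⨆ n, ‖y n‖ ^ q n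

variable {q : ι → ℝ}

lemma varLInfty_div_const {M : ℝ} (hM : 0 < M) :
    varLInfty (E := E) (fun n => q n / M) = varLInfty q := by
  ext y
  have hsplit : ∀ n, ‖y n‖ ^ (q n / M) = (‖y n‖ ^ q n) ^ M⁻¹ := fun n => by
    rw [← Real.rpow_mul (norm_nonneg _), div_eq_mul_inv]
  simp only [varLInfty, Set.mem_ofPred_eq, hsplit]
  exact bddAbove_range_rpow_iff (fun n => by positivity) (inv_pos.2 hM)

lemma neg_mem_varLInfty {y : ι → E} (hy : y ∈ varLInfty q) : -y ∈ varLInfty q := by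
  simpa [varLInfty] using hy

lemma rpow_norm_add_le {r : ℝ} (hr0 : 0 ≤ r) (hr1 : r ≤ 1) (a b : E) :
    ‖a + b‖ ^ r ≤ ‖a‖ ^ r + ‖b‖ ^ r :=
  (Real.rpow_le_rpow (norm_nonneg _) (norm_add_le a b) hr0).trans
    (Real.rpow_add_le_add_rpow (norm_nonneg _) (norm_nonneg _) hr0 hr1)

lemma rpow_norm_smul_le {r : ℝ} (hr0 : 0 ≤ r) (hr1 : r ≤ 1) (b : 𝕜) (a : E) :
    ‖b • a‖ ^ r ≤ max ‖b‖ 1 * ‖a‖ ^ r := by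
  rw [norm_smul, Real.mul_rpow (norm_nonneg _) (norm_nonneg _)]
  exact mul_le_mul_of_nonneg_right (rpow_le_max_one (norm_nonneg b) hr0 hr1) (by positivity)

lemma add_mem_varLInfty (hq0 : ∀ n, 0 ≤ q n) (hq1 : ∀ n, q n ≤ 1) {y z : ι → E}
    (hy : y ∈ varLInfty q) (hz : z ∈ varLInfty q) : y + z ∈ varLInfty q := by
  obtain ⟨C, hC⟩ := hy
  obtain ⟨D, hD⟩ := hz
  exact ⟨C + D, Set.forall_mem_range.2 fun n => (rpow_norm_add_le (hq0 n) (hq1 n) _ _).trans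
    (add_le_add (hC (Set.mem_range_self n)) (hD (Set.mem_range_self n)))⟩

lemma sub_mem_varLInfty (hq0 : ∀ n, 0 ≤ q n) (hq1 : ∀ n, q n ≤ 1) {y z : ι → E}
    (hy : y ∈ varLInfty q) (hz : z ∈ varLInfty q) : y - z ∈ varLInfty q :=
  sub_eq_add_neg y z ▸ add_mem_varLInfty hq0 hq1 hy (neg_mem_varLInfty hz)

lemma smul_mem_varLInfty (hq0 : ∀ n, 0 ≤ q n) (hq1 : ∀ n, q n ≤ 1) (b : 𝕜) {y : ι → E}
    (hy : y ∈ varLInfty q) : b • y ∈ varLInfty q := by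
  obtain ⟨C, hC⟩ := hy
  exact ⟨max ‖b‖ 1 * C, Set.forall_mem_range.2 fun n =>
    (rpow_norm_smul_le (hq0 n) (hq1 n) b _).trans
      (mul_le_mul_of_nonneg_left (hC (Set.mem_range_self n)) (by positivity))⟩

lemma rpow_norm_le_supRpow {y : ι → E} (hy : y ∈ varLInfty q) (n : ι) :
    ‖y n‖ ^ q n ≤ supRpow q y :=
  le_ciSup hy n

lemma supRpow_nonneg (y : ι → E) : 0 ≤ supRpow q y :=
  Real.iSup_nonneg fun _ => by positivity

lemma supRpow_le {y : ι → E} {C : ℝ} (hC : ∀ n, ‖y n‖ ^ q n ≤ C) (hC0 : 0 ≤ C) :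
    supRpow q y ≤ C :=
  Real.iSup_le hC hC0

lemma supRpow_zero (hq : ∀ n, q n ≠ 0) : supRpow q (0 : ι → E) = 0 := by
  simp [supRpow, Real.zero_rpow (hq _)]

lemma supRpow_neg (y : ι → E) : supRpow q (-y) = supRpow q y := by
  simp [supRpow]

lemma supRpow_add_le (hq0 : ∀ n, 0 ≤ q n) (hq1 : ∀ n, q n ≤ 1) {y z : ι → E}
    (hy : y ∈ varLInfty q) (hz : z ∈ varLInfty q) :
    supRpow q (y + z) ≤ supRpow q y + supRpow q z :=
  supRpow_le (fun n => (rpow_norm_add_le (hq0 n) (hq1 n) _ _).trans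
      (add_le_add (rpow_norm_le_supRpow hy n) (rpow_norm_le_supRpow hz n)))
    (add_nonneg (supRpow_nonneg y) (supRpow_nonneg z))

lemma supRpow_smul_le (hq0 : ∀ n, 0 ≤ q n) (hq1 : ∀ n, q n ≤ 1) (b : 𝕜) {y : ι → E}
    (hy : y ∈ varLInfty q) : supRpow q (b • y) ≤ max ‖b‖ 1 * supRpow q y :=
  supRpow_le (fun n => (rpow_norm_smul_le (hq0 n) (hq1 n) b _).trans
      (mul_le_mul_of_nonneg_left (rpow_norm_le_supRpow hy n) (by positivity)))
    (mul_nonneg (by positivity) (supRpow_nonneg y))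

lemma supRpow_smul_le_of_norm_le_one {c : ℝ} (hc : 0 ≤ c) (hcq : ∀ n, c ≤ q n) {b : 𝕜}
    (hb : ‖b‖ ≤ 1) {y : ι → E} (hy : y ∈ varLInfty q) :
    supRpow q (b • y) ≤ ‖b‖ ^ c * supRpow q y := by
  refine supRpow_le (fun n => ?_) (mul_nonneg (by positivity) (supRpow_nonneg y))
  rw [Pi.smul_apply, norm_smul, Real.mul_rpow (norm_nonneg _) (norm_nonneg _)]
  exact mul_le_mul (Real.rpow_le_rpow_of_exponent_ge' (norm_nonneg _) hb hc (hcq n))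
    (rpow_norm_le_supRpow hy n) (by positivity) (by positivity)

lemma tendsto_supRpow_smul_sub {c : ℝ} (hc : 0 < c) (hcq : ∀ n, c ≤ q n) (hq1 : ∀ n, q n ≤ 1)
    {α : ℕ → 𝕜} {a : 𝕜} {ys : ℕ → ι → E} {y : ι → E} (hys : ∀ m, ys m ∈ varLInfty q)
    (hy : y ∈ varLInfty q) (hα : Tendsto α atTop (𝓝 a))
    (hlim : Tendsto (fun m => supRpow q (ys m - y)) atTop (𝓝 0)) :
    Tendsto (fun m => supRpow q (α m • ys m - a • y)) atTop (𝓝 0) := by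
  have hq0 : ∀ n, 0 ≤ q n := fun n => hc.le.trans (hcq n)
  obtain ⟨K, hK⟩ := hα.norm.bddAbove_range
  have hdist : Tendsto (fun m => ‖α m - a‖) atTop (𝓝 0) := tendsto_iff_norm_sub_tendsto_zero.1 hα
  have hbound : Tendsto (fun m => max K 1 * supRpow q (ys m - y) + ‖α m - a‖ ^ c * supRpow q y)
      atTop (𝓝 0) := by
    have hpow : Tendsto (fun m => ‖α m - a‖ ^ c) atTop (𝓝 0) := by
      simpa [Real.zero_rpow hc.ne'] using hdist.rpow_const (Or.inr hc.le)
    simpa using (hlim.const_mul (max K 1)).add (hpow.mul_const (supRpow q y))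
  refine squeeze_zero' (Eventually.of_forall fun m => supRpow_nonneg _) ?_ hbound
  filter_upwards [hdist.eventually (ge_mem_nhds one_pos)] with m hm
  have hsub : ys m - y ∈ varLInfty q := sub_mem_varLInfty hq0 hq1 (hys m) hy
  have hsplit : α m • ys m - a • y = α m • (ys m - y) + (α m - a) • y := by
    rw [smul_sub, sub_smul]; abel
  calc supRpow q (α m • ys m - a • y)
      ≤ supRpow q (α m • (ys m - y)) + supRpow q ((α m - a) • y) :=
        hsplit ▸ supRpow_add_le hq0 hq1 (smul_mem_varLInfty hq0 hq1 _ hsub)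
          (smul_mem_varLInfty hq0 hq1 _ hy)
    _ ≤ max K 1 * supRpow q (ys m - y) + ‖α m - a‖ ^ c * supRpow q y := by
        refine add_le_add ((supRpow_smul_le hq0 hq1 _ hsub).trans ?_)
          (supRpow_smul_le_of_norm_le_one hc.le hcq hm hy)
        exact mul_le_mul_of_nonneg_right (max_le_max (hK (Set.mem_range_self m)) le_rfl)
          (supRpow_nonneg _)

/-- The limit is the coordinatewise limit; letting `l → ∞` in the Cauchy estimate bounds
`‖ys m n - y n‖ ^ q n` uniformly in `n`. -/
lemma exists_tendsto_supRpow_sub_of_cauchy [CompleteSpace E] (hq_pos : ∀ n, 0 < q n)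
    (hq1 : ∀ n, q n ≤ 1) {ys : ℕ → ι → E} (hys : ∀ m, ys m ∈ varLInfty q)
    (hcauchy : ∀ ε > 0, ∃ N, ∀ m ≥ N, ∀ l ≥ N, supRpow q (ys m - ys l) < ε) :
    ∃ y ∈ varLInfty q, Tendsto (fun m => supRpow q (ys m - y)) atTop (𝓝 0) := by
  have hq0 : ∀ n, 0 ≤ q n := fun n => (hq_pos n).le
  have hcoord : ∀ n, CauchySeq fun m => ys m n := by
    intro n
    refine Metric.cauchySeq_iff.2 fun δ hδ => ?_
    obtain ⟨N, hN⟩ := hcauchy (δ ^ q n) (by positivity)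
    refine ⟨N, fun m hm l hl => ?_⟩
    rw [dist_eq_norm, ← Real.rpow_lt_rpow_iff (norm_nonneg _) hδ.le (hq_pos n)]
    exact (rpow_norm_le_supRpow (sub_mem_varLInfty hq0 hq1 (hys m) (hys l)) n).trans_lt
      (hN m hm l hl)
  choose y hy using fun n => cauchySeq_tendsto_of_complete (hcoord n)
  have hunif : ∀ ε > 0, ∃ N, ∀ m ≥ N, ∀ n, ‖ys m n - y n‖ ^ q n ≤ ε := by
    intro ε hε
    obtain ⟨N, hN⟩ := hcauchy ε hε
    refine ⟨N, fun m hm n => le_of_tendsto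
      ((tendsto_const_nhds.sub (hy n)).norm.rpow_const (Or.inr (hq0 n)))
      (eventually_atTop.2 ⟨N, fun l hl => ?_⟩)⟩
    exact (rpow_norm_le_supRpow (sub_mem_varLInfty hq0 hq1 (hys m) (hys l)) n).trans
      (hN m hm l hl).le
  obtain ⟨N, hN⟩ := hunif 1 one_pos
  have hyN : ys N - y ∈ varLInfty q := ⟨1, Set.forall_mem_range.2 (hN N le_rfl)⟩
  refine ⟨y, sub_sub_cancel (ys N) y ▸ sub_mem_varLInfty hq0 hq1 (hys N) hyN, ?_⟩
  refine tendsto_order.2 ⟨fun b hb => Eventually.of_forall fun m => hb.trans_le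
    (supRpow_nonneg _), fun b hb => ?_⟩
  obtain ⟨N', hN'⟩ := hunif (b / 2) (half_pos hb)
  filter_upwards [eventually_ge_atTop N'] with m hm
  exact (supRpow_le (hN' m hm) (half_pos hb).le).trans_lt (half_lt_self hb)

theorem isCompleteParanormedSubspace_varLInfty [CompleteSpace E] {c : ℝ} (hc : 0 < c)
    (hcq : ∀ n, c ≤ q n) (hq1 : ∀ n, q n ≤ 1) :
    IsCompleteParanormedSubspace 𝕜 (varLInfty (E := E) q) (supRpow q) := by
  have hq_pos : ∀ n, 0 < q n := fun n => hc.trans_le (hcq n)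
  have hq0 : ∀ n, 0 ≤ q n := fun n => (hq_pos n).le
  exact
    { add_mem := fun _ hx _ hy => add_mem_varLInfty hq0 hq1 hx hy
      smul_mem := fun b _ hx => smul_mem_varLInfty hq0 hq1 b hx
      map_zero := supRpow_zero fun n => (hq_pos n).ne'
      map_neg := supRpow_neg
      add_le := fun _ hx _ hy => supRpow_add_le hq0 hq1 hx hy
      tendsto_smul := fun _ _ _ _ hxs hx hα hlim =>
        tendsto_supRpow_smul_sub hc hcq hq1 hxs hx hα hlim
      complete := fun _ hxs hcauchy =>
        exists_tendsto_supRpow_sub_of_cauchy hq_pos hq1 hxs hcauchy }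

theorem isCompleteParanormedSubspace_varLInfty_div [CompleteSpace E] {p : ι → ℝ} {c M : ℝ}
    (hc : 0 < c) (hcp : ∀ n, c ≤ p n) (hpM : ∀ n, p n ≤ M) (hM : 0 < M) :
    IsCompleteParanormedSubspace 𝕜 (varLInfty (E := E) p) (supRpow fun n => p n / M) := by
  rw [← varLInfty_div_const hM]
  exact isCompleteParanormedSubspace_varLInfty (div_pos hc hM)
    (fun n => div_le_div_of_nonneg_right (hcp n) hM.le)
    (fun n => div_le_one_of_le₀ (hpM n) hM.le)

end VarLInfty

section LowerTriangular

variable {K : Type*} [Field K]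

/-- Forward substitution for the lower triangular system `∑_{k<n} c n k xₖ + d n xₙ = yₙ`. -/
noncomputable def lowerTriangularSolve (c : ℕ → ℕ → K) (d : ℕ → K) (y : ℕ → K) : ℕ → K
  | n => (y n - ∑ k ∈ (range n).attach, c n k.1 * lowerTriangularSolve c d y k.1) / d n
decreasing_by exact mem_range.mp k.2

lemma sum_mul_lowerTriangularSolve_add (c : ℕ → ℕ → K) {d : ℕ → K} (y : ℕ → K) {n : ℕ}
    (hd : d n ≠ 0) :
    ∑ k ∈ range n, c n k * lowerTriangularSolve c d y k
      + d n * lowerTriangularSolve c d y n = y n := by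
  rw [lowerTriangularSolve, sum_attach (range n)
    (fun k => c n k * lowerTriangularSolve c d y k)]
  field_simp
  ring

end LowerTriangular

lemma GmB_eq_sum_add (r s t : ℕ → ℂ) (u v : ℂ) (x : ℕ → ℂ) (n : ℕ) :
    GmB r s t u v x n = ∑ k ∈ range n,
      (r n)⁻¹ * (s (n - k) * t k * u + s (n - k - 1) * t (k + 1) * v) * x k
      + (r n)⁻¹ * (s 0 * t n * u) * x n := by
  rw [GmB, mul_add, mul_sum]
  simp only [mul_assoc]

noncomputable def GmBLinearMap (r s t : ℕ → ℂ) (u v : ℂ) : (ℕ → ℂ) →ₗ[ℂ] (ℕ → ℂ) where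
  toFun := GmB r s t u v
  map_add' x y := by
    ext n
    simp only [GmB, Pi.add_apply, mul_add, sum_add_distrib]
    ring
  map_smul' b x := by
    ext n
    simp only [GmB_eq_sum_add, Pi.smul_apply, smul_eq_mul, RingHom.id_apply, mul_add, mul_sum,
      mul_left_comm _ b]

lemma GmBLinearMap_surjective {r s t : ℕ → ℂ} {u v : ℂ} (hr : ∀ n, r n ≠ 0)
    (ht : ∀ n, t n ≠ 0) (hs : s 0 ≠ 0) (hu : u ≠ 0) :
    Function.Surjective (GmBLinearMap r s t u v) := by
  intro y
  let c : ℕ → ℕ → ℂ := fun n k =>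
    (r n)⁻¹ * (s (n - k) * t k * u + s (n - k - 1) * t (k + 1) * v)
  let d : ℕ → ℂ := fun n => (r n)⁻¹ * (s 0 * t n * u)
  have hd : ∀ n, d n ≠ 0 := fun n =>
    mul_ne_zero (inv_ne_zero (hr n)) (mul_ne_zero (mul_ne_zero hs (ht n)) hu)
  exact ⟨lowerTriangularSolve c d y, funext fun n =>
    (GmB_eq_sum_add r s t u v _ n).trans (sum_mul_lowerTriangularSolve_add c y (hd n))⟩

theorem stmt1_general (r s t : ℕ → ℂ) (u v : ℂ) (p : ℕ → ℝ)
    (hr : ∀ n, r n ≠ 0) (ht : ∀ n, t n ≠ 0) (hs : s 0 ≠ 0) (hu : u ≠ 0)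
    (hpb : BddAbove (Set.range p))
    (hinf : ∃ c > (0 : ℝ), ∀ k, c ≤ p k)
    (M : ℝ) (hM : M = max 1 (⨆ k, p k))
    (X : Set (ℕ → ℂ))
    (hX : X = {x | BddAbove (Set.range fun n => ‖GmB r s t u v x n‖ ^ p n)})
    (h : (ℕ → ℂ) → ℝ)
    (hh : h = fun x => ⨆ n, ‖GmB r s t u v x n‖ ^ (p n / M)) :
    -- X is a linear space
    (∀ x ∈ X, ∀ y ∈ X, x + y ∈ X) ∧
    (∀ (c : ℂ), ∀ x ∈ X, c • x ∈ X) ∧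
    -- h is a paranorm on X
    h 0 = 0 ∧
    (∀ x, h (-x) = h x) ∧
    (∀ x ∈ X, ∀ y ∈ X, h (x + y) ≤ h x + h y) ∧
    (∀ (α : ℕ → ℂ) (a : ℂ) (xs : ℕ → ℕ → ℂ) (x : ℕ → ℂ),
      (∀ m, xs m ∈ X) → x ∈ X →
      Tendsto α atTop (nhds a) →
      Tendsto (fun m => h (xs m - x)) atTop (nhds 0) →
      Tendsto (fun m => h (α m • xs m - a • x)) atTop (nhds 0)) ∧
    -- completeness with respect to the paranorm
    (∀ xs : ℕ → ℕ → ℂ, (∀ m, xs m ∈ X) →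
      (∀ ε > (0 : ℝ), ∃ N, ∀ m ≥ N, ∀ l ≥ N, h (xs m - xs l) < ε) →
      ∃ x ∈ X, Tendsto (fun m => h (xs m - x)) atTop (nhds 0)) := by
  obtain ⟨c, hc, hcp⟩ := hinf
  have hM0 : 0 < M := hM ▸ zero_lt_one.trans_le (le_max_left _ _)
  have hpM : ∀ n, p n ≤ M := fun n => hM ▸ (le_ciSup hpb n).trans (le_max_right _ _)
  have H := (isCompleteParanormedSubspace_varLInfty_div (𝕜 := ℂ) (E := ℂ) hc hcp hpM hM0).comap
    (GmBLinearMap_surjective (v := v) hr ht hs hu)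
  subst hX hh
  exact ⟨H.add_mem, H.smul_mem, H.map_zero, H.map_neg, H.add_le, H.tendsto_smul, H.complete⟩

/-- `l_∞(r,s,t,p;B)` is a complete linear metric space paranormed by
`h(x) = sup_n |(A(r,s,t;B)x)_n|^{p_n/M}`, provided `inf_k p_k > 0`. -/
theorem stmt1 (r s t : ℕ → ℂ) (u v : ℂ) (p : ℕ → ℝ)
    (hr : ∀ n, r n ≠ 0) (ht : ∀ n, t n ≠ 0) (hs : s 0 ≠ 0) (hu : u ≠ 0) (hv : v ≠ 0)
    (hp : ∀ k, 0 < p k) (hpb : BddAbove (Set.range p))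
    (hinf : ∃ c > (0 : ℝ), ∀ k, c ≤ p k)
    (M : ℝ) (hM : M = max 1 (⨆ k, p k))
    (X : Set (ℕ → ℂ))
    (hX : X = {x | BddAbove (Set.range fun n => ‖GmB r s t u v x n‖ ^ p n)})
    (h : (ℕ → ℂ) → ℝ)
    (hh : h = fun x => ⨆ n, ‖GmB r s t u v x n‖ ^ (p n / M)) :
    -- X is a linear space
    (∀ x ∈ X, ∀ y ∈ X, x + y ∈ X) ∧
    (∀ (c : ℂ), ∀ x ∈ X, c • x ∈ X) ∧
    -- h is a paranorm on X
    h 0 = 0 ∧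
    (∀ x, h (-x) = h x) ∧
    (∀ x ∈ X, ∀ y ∈ X, h (x + y) ≤ h x + h y) ∧
    (∀ (α : ℕ → ℂ) (a : ℂ) (xs : ℕ → ℕ → ℂ) (x : ℕ → ℂ),
      (∀ m, xs m ∈ X) → x ∈ X →
      Tendsto α atTop (nhds a) →
      Tendsto (fun m => h (xs m - x)) atTop (nhds 0) →
      Tendsto (fun m => h (α m • xs m - a • x)) atTop (nhds 0)) ∧
    -- completeness with respect to the paranorm
    (∀ xs : ℕ → ℕ → ℂ, (∀ m, xs m ∈ X) →
      (∀ ε > (0 : ℝ), ∃ N, ∀ m ≥ N, ∀ l ≥ N, h (xs m - xs l) < ε) →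
      ∃ x ∈ X, Tendsto (fun m => h (xs m - x)) atTop (nhds 0)) :=
  stmt1_general r s t u v p hr ht hs hu hpb hinf M hM X hX h hh
end

section
/- The map T : l(r,s,t,p;B) → l(p) defined by Tx = A(r,s,t;B)x is a linear bijection which preserves the paranorms; hence l(r,s,t,p;B) is linearly isomorphic to l(p). -/
/-!
`A(r,s,t;B)` is a lower triangular matrix whose diagonal entries `s₀ tₙ u / rₙ` are nonzero, so
it acts bijectively on all of `ℂ^ℕ`: forward substitution inverts it. Since `l(r,s,t,p;B)` is by
definition the preimage of `l(p)` and carries the pulled-back paranorm, `T` restricts to a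
paranorm-preserving bijection.
-/

open Filter Finset Topology

section Triangle

variable {K : Type*}

/-- The triangle with entries `c n k` below the diagonal (`k < n`) and `d n` on it. -/
def triangleMap [CommSemiring K] (c : ℕ → ℕ → K) (d : ℕ → K) (x : ℕ → K) (n : ℕ) : K :=
  ∑ k ∈ range n, c n k * x k + d n * x n

theorem triangleMap_add [CommSemiring K] (c : ℕ → ℕ → K) (d : ℕ → K) (x y : ℕ → K) :
    triangleMap c d (x + y) = triangleMap c d x + triangleMap c d y := by
  funext n
  simp only [triangleMap, Pi.add_apply, mul_add, sum_add_distrib]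
  ring

theorem triangleMap_smul [CommSemiring K] (c : ℕ → ℕ → K) (d : ℕ → K) (a : K) (x : ℕ → K) :
    triangleMap c d (a • x) = a • triangleMap c d x := by
  funext n
  simp only [triangleMap, Pi.smul_apply, smul_eq_mul, mul_add, mul_sum]
  congr 1
  · exact sum_congr rfl fun _ _ => mul_left_comm _ _ _
  · ring

variable [Field K] (c : ℕ → ℕ → K) (d : ℕ → K)

noncomputable def triangleSolve (y : ℕ → K) (n : ℕ) : K :=
  (d n)⁻¹ * (y n - ∑ k ∈ (range n).attach, c n k * triangleSolve y k)
termination_by n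
decreasing_by exact mem_range.mp k.2

theorem triangleSolve_eq (y : ℕ → K) (n : ℕ) :
    triangleSolve c d y n = (d n)⁻¹ * (y n - ∑ k ∈ range n, c n k * triangleSolve c d y k) := by
  rw [triangleSolve, sum_attach (range n) fun k => c n k * triangleSolve c d y k]

variable {d} (hd : ∀ n, d n ≠ 0)
include hd

theorem triangleMap_triangleSolve (y : ℕ → K) : triangleMap c d (triangleSolve c d y) = y := by
  funext n
  rw [triangleMap, triangleSolve_eq, mul_inv_cancel_left₀ (hd n), add_sub_cancel]

theorem triangleSolve_triangleMap (x : ℕ → K) : triangleSolve c d (triangleMap c d x) = x := by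
  funext n
  induction n using Nat.strong_induction_on with
  | _ n ih =>
    rw [triangleSolve_eq, sum_congr rfl fun k hk => by rw [ih k (mem_range.mp hk)], triangleMap,
      add_sub_cancel_left, inv_mul_cancel_left₀ (hd n)]

theorem triangleMap_bijective : Function.Bijective (triangleMap c d) :=
  ⟨Function.LeftInverse.injective (g := triangleSolve c d) (triangleSolve_triangleMap c hd),
    Function.RightInverse.surjective (g := triangleSolve c d) (triangleMap_triangleSolve c hd)⟩

end Triangle

theorem GmB_eq_triangleMap (r s t : ℕ → ℂ) (u v : ℂ) :
    GmB r s t u v =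
      triangleMap (fun n k => (r n)⁻¹ * (s (n - k) * t k * u + s (n - k - 1) * t (k + 1) * v))
        (fun n => (r n)⁻¹ * (s 0 * t n * u)) := by
  funext x n
  rw [GmB, triangleMap, mul_add, mul_sum]
  congr 1
  · exact sum_congr rfl fun _ _ => by ring
  · ring

theorem stmt3_general (r s t : ℕ → ℂ) (u v : ℂ) (p : ℕ → ℝ)
    (hr : ∀ n, r n ≠ 0) (ht : ∀ n, t n ≠ 0) (hs : s 0 ≠ 0) (hu : u ≠ 0) (M : ℝ)
    (X : Set (ℕ → ℂ)) (hX : X = {x | Summable fun n => ‖GmB r s t u v x n‖ ^ p n})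
    (Y : Set (ℕ → ℂ)) (hY : Y = {y | Summable fun n => ‖y n‖ ^ p n})
    (T : (ℕ → ℂ) → (ℕ → ℂ)) (hT : T = fun x => GmB r s t u v x)
    (h : (ℕ → ℂ) → ℝ)
    (hh : h = fun x => (∑' n, ‖GmB r s t u v x n‖ ^ p n) ^ (1 / M))
    (g : (ℕ → ℂ) → ℝ) (hg : g = fun y => (∑' n, ‖y n‖ ^ p n) ^ (1 / M)) :
    -- T maps X into Y
    (∀ x ∈ X, T x ∈ Y) ∧
    -- T is linear
    (∀ x y : ℕ → ℂ, T (x + y) = T x + T y) ∧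
    (∀ (c : ℂ) (x : ℕ → ℂ), T (c • x) = c • T x) ∧
    -- T is injective on X
    (∀ x₁ ∈ X, ∀ x₂ ∈ X, T x₁ = T x₂ → x₁ = x₂) ∧
    -- T is surjective onto Y
    (∀ y ∈ Y, ∃ x ∈ X, T x = y) ∧
    -- T preserves the paranorms
    (∀ x ∈ X, h x = g (T x)) := by
  have hdiag : ∀ n, (r n)⁻¹ * (s 0 * t n * u) ≠ 0 := fun n =>
    mul_ne_zero (inv_ne_zero (hr n)) (mul_ne_zero (mul_ne_zero hs (ht n)) hu)
  have hT_triangle : T = triangleMap _ _ := hT.trans (GmB_eq_triangleMap r s t u v)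
  obtain ⟨hinj, hsurj⟩ := triangleMap_bijective _ hdiag
  subst hX hY hh hg
  refine ⟨fun x hx => by rwa [hT], fun x y => by rw [hT_triangle, triangleMap_add],
    fun a x => by rw [hT_triangle, triangleMap_smul], fun x₁ _ x₂ _ he => hinj (by rwa [hT_triangle] at he),
    fun y hy => ?_, fun x _ => by rw [hT]⟩
  obtain ⟨x, rfl⟩ := hsurj y
  exact ⟨x, by rwa [GmB_eq_triangleMap], by rw [hT_triangle]⟩

/-- The map `T : l(r,s,t,p;B) → l(p)`, `Tx = A(r,s,t;B)x`, is a paranorm-preserving linear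
bijection; hence `l(r,s,t,p;B) ≅ l(p)`. -/
theorem stmt3 (r s t : ℕ → ℂ) (u v : ℂ) (p : ℕ → ℝ)
    (hr : ∀ n, r n ≠ 0) (ht : ∀ n, t n ≠ 0) (hs : s 0 ≠ 0) (hu : u ≠ 0) (hv : v ≠ 0)
    (hp : ∀ k, 0 < p k) (hpb : BddAbove (Set.range p)) (M : ℝ) (hM : M = max 1 (⨆ k, p k))
    (X : Set (ℕ → ℂ)) (hX : X = {x | Summable fun n => ‖GmB r s t u v x n‖ ^ p n})
    (Y : Set (ℕ → ℂ)) (hY : Y = {y | Summable fun n => ‖y n‖ ^ p n})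
    (T : (ℕ → ℂ) → (ℕ → ℂ)) (hT : T = fun x => GmB r s t u v x)
    (h : (ℕ → ℂ) → ℝ)
    (hh : h = fun x => (∑' n, ‖GmB r s t u v x n‖ ^ p n) ^ (1 / M))
    (g : (ℕ → ℂ) → ℝ) (hg : g = fun y => (∑' n, ‖y n‖ ^ p n) ^ (1 / M)) :
    -- T maps X into Y
    (∀ x ∈ X, T x ∈ Y) ∧
    -- T is linear
    (∀ x y : ℕ → ℂ, T (x + y) = T x + T y) ∧
    (∀ (c : ℂ) (x : ℕ → ℂ), T (c • x) = c • T x) ∧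
    -- T is injective on X
    (∀ x₁ ∈ X, ∀ x₂ ∈ X, T x₁ = T x₂ → x₁ = x₂) ∧
    -- T is surjective onto Y
    (∀ y ∈ Y, ∃ x ∈ X, T x = y) ∧
    -- T preserves the paranorms
    (∀ x ∈ X, h x = g (T x)) :=
  stmt3_general r s t u v p hr ht hs hu M X hX Y hY T hT h hh g hg
end

section
/- The inverse of the triangle A(r,s,t) of generalized means is the triangle B̃ with entries b̃_{nk} = (-1)^{n-k} (D^{(s)}_{n-k}/t_n) r_k for 0 ≤ k ≤ n and 0 for k > n, where D^{(s)}_0 = 1/s_0 and D^{(s)}_n = (1/s_0^{n+1}) times the determinant of the n×n Toeplitz-type matrix with first column (s_1, s_2, ..., s_n), first row (s_1, s_0, 0, ..., 0), and entries s_{i-j+1} in position (i,j). -/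
/-!
Write `T(a)` for the lower triangular Toeplitz matrix `(a_{n-k})` of a sequence `a` and put
`d_n = (-1)^n D^{(s)}_n`. Then `A(r,s,t) = diag(1/r) T(s) diag(t)` and
`B̃ = diag(1/t) T(d) diag(r)`, and `T(a) T(b) = T(a * b)` for the Cauchy product, so both
identities reduce to `(∑ s_n x^n) (∑ d_n x^n) = 1`. Comparing coefficients, this is the
recursion `s_0 d_{m+1} = -∑_{i+j=m} s_{i+1} d_j`, which is the expansion of the Hessenberg
determinant defining `D^{(s)}_{m+1}` along its first row `(s_1, s_0, 0, …, 0)`.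
-/

open Finset

/-- `D^{(s)}_n`: `D_0 = 1/s_0`, and for `n ≥ 1`,
`D_n = s_0^{-(n+1)}` times the determinant of the `n×n` matrix whose `(i,j)` entry is
`s_{i-j+1}` (with `s_m = 0` for `m < 0`), i.e. first column `(s_1,…,s_n)`,
first row `(s_1, s_0, 0, …, 0)`. -/
noncomputable def Dets (s : ℕ → ℂ) (n : ℕ) : ℂ :=
  if n = 0 then (s 0)⁻¹
  else ((s 0) ^ (n + 1))⁻¹ *
    (Matrix.of fun i j : Fin n =>
      if (j : ℕ) ≤ (i : ℕ) + 1 then s ((i : ℕ) + 1 - (j : ℕ)) else 0).det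

/-- The matrix `A(r,s,t)` of generalized means: `(A(r,s,t))_{nk} = s_{n-k} t_k / r_n`
for `0 ≤ k ≤ n`, `0` otherwise. -/
noncomputable def Agm (r s t : ℕ → ℂ) (n k : ℕ) : ℂ :=
  if k ≤ n then s (n - k) * t k / r n else 0

/-- The claimed inverse triangle `B̃`: `b̃_{nk} = (-1)^{n-k} (D^{(s)}_{n-k}/t_n) r_k`
for `0 ≤ k ≤ n`, `0` otherwise. -/
noncomputable def Btil (r s t : ℕ → ℂ) (n k : ℕ) : ℂ :=
  if k ≤ n then (-1 : ℂ) ^ (n - k) * (Dets s (n - k) / t n) * r k else 0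

section Hessenberg

variable {R : Type*} [CommRing R]

/-- The determinant in `Dets s n` is that of `hessenberg (fun i => s (i + 1)) s n`; freeing the
first column is needed because deleting column `1` in the first-row expansion shifts it. -/
def hessenberg (c s : ℕ → R) (n : ℕ) : Matrix (Fin n) (Fin n) R :=
  Matrix.of fun i j => if (j : ℕ) = 0 then c i else if (j : ℕ) ≤ i + 1 then s (i + 1 - j) else 0

theorem det_hessenberg_add_two (c s : ℕ → R) (n : ℕ) :
    (hessenberg c s (n + 2)).det =
      c 0 * (hessenberg (fun i => s (i + 1)) s (n + 1)).det -
        s 0 * (hessenberg (fun i => c (i + 1)) s (n + 1)).det := by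
  have minor_zero : (hessenberg c s (n + 2)).submatrix Fin.succ (Fin.succAbove 0) =
      hessenberg (fun i => s (i + 1)) s (n + 1) := by
    ext i j
    simp only [hessenberg, Matrix.submatrix_apply, Matrix.of_apply, Fin.succAbove_zero,
      Fin.val_succ, Nat.add_one_ne_zero, if_false]
    split_ifs <;> first | rfl | omega | (congr 1; omega)
  have minor_one : (hessenberg c s (n + 2)).submatrix Fin.succ (Fin.succAbove 1) =
      hessenberg (fun i => c (i + 1)) s (n + 1) := by
    ext i j
    cases j using Fin.cases with
    | zero => simp [hessenberg]
    | succ j =>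
      have : (1 : Fin (n + 2)).succAbove j.succ = j.succ.succ :=
        Fin.succAbove_of_le_castSucc _ _ (by simp [Fin.le_def])
      simp only [hessenberg, Matrix.submatrix_apply, Matrix.of_apply, this, Fin.val_succ]
      split_ifs <;> first | rfl | omega | (congr 1; omega)
  have entry_zero : hessenberg c s (n + 2) 0 0 = c 0 := by simp [hessenberg]
  have entry_one : hessenberg c s (n + 2) 0 1 = s 0 := by simp [hessenberg]
  rw [Matrix.det_succ_row_zero, Fin.sum_univ_succ, Fin.sum_univ_succ, Finset.sum_eq_zero]
  · simp only [Fin.succ_zero_eq_one, minor_zero, minor_one, entry_zero, entry_one, Fin.val_zero,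
      Fin.val_one, pow_zero, pow_one, add_zero]
    ring
  · intro j _
    simp [hessenberg]

theorem det_hessenberg_succ (c s : ℕ → R) (n : ℕ) :
    (hessenberg c s (n + 1)).det =
      ∑ p ∈ antidiagonal n, (-s 0) ^ p.1 * c p.1 * (hessenberg (fun i => s (i + 1)) s p.2).det := by
  induction n generalizing c with
  | zero => simp [hessenberg]
  | succ n ih =>
    rw [det_hessenberg_add_two, ih (fun i => c (i + 1)), Nat.sum_antidiagonal_succ, mul_sum]
    simp only [pow_zero, one_mul, pow_succ, sub_eq_add_neg, ← sum_neg_distrib]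
    exact congrArg _ (sum_congr rfl fun p _ => by ring)

end Hessenberg

noncomputable def signedDets (s : ℕ → ℂ) (n : ℕ) : ℂ := (-1) ^ n * Dets s n

theorem Dets_eq_inv_mul_det (s : ℕ → ℂ) (n : ℕ) :
    Dets s n = (s 0 ^ (n + 1))⁻¹ * (hessenberg (fun i => s (i + 1)) s n).det := by
  unfold Dets
  split_ifs with hn
  · subst hn
    simp
  · congr 2
    ext i j
    simp only [hessenberg, Matrix.of_apply]
    split_ifs <;> first | rfl | omega | (congr 1; omega)

theorem s_zero_mul_signedDets_succ (s : ℕ → ℂ) (hs : s 0 ≠ 0) (m : ℕ) :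
    s 0 * signedDets s (m + 1) = -∑ p ∈ antidiagonal m, s (p.1 + 1) * signedDets s p.2 := by
  simp only [signedDets, Dets_eq_inv_mul_det, det_hessenberg_succ, mul_sum, ← sum_neg_distrib]
  refine sum_congr rfl fun p hp => ?_
  obtain rfl := mem_antidiagonal.mp hp
  rw [neg_pow]
  field_simp
  ring_nf
  rw [pow_mul', neg_one_sq, one_pow, mul_one]

theorem mk_mul_mk_signedDets (s : ℕ → ℂ) (hs : s 0 ≠ 0) :
    PowerSeries.mk s * PowerSeries.mk (signedDets s) = 1 := by
  ext m
  rw [PowerSeries.coeff_mul, PowerSeries.coeff_one]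
  cases m with
  | zero => simp [signedDets, Dets, hs]
  | succ m =>
    simp [Nat.sum_antidiagonal_succ, s_zero_mul_signedDets_succ s hs]

theorem sum_range_ite_mul_eq_coeff_mul {R : Type*} [CommSemiring R] (a b : ℕ → R) (n k : ℕ) :
    ∑ j ∈ range (n + 1), (if k ≤ j then a (n - j) * b (j - k) else 0) =
      if k ≤ n then PowerSeries.coeff (n - k) (PowerSeries.mk a * PowerSeries.mk b) else 0 := by
  split_ifs with hkn
  · have : (range (n + 1)).filter (k ≤ ·) = Ico k (n + 1) := by ext; simp; omega
    rw [← sum_filter, this, sum_Ico_eq_sum_range, PowerSeries.coeff_mul,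
      ← Nat.sum_antidiagonal_swap, Nat.sum_antidiagonal_eq_sum_range_succ_mk,
      show n + 1 - k = (n - k).succ by omega]
    refine sum_congr rfl fun i hi => ?_
    simp only [Prod.swap_prod_mk, PowerSeries.coeff_mk]
    congr 2 <;> omega
  · exact sum_eq_zero fun j hj => if_neg (by simp at hj; omega)

theorem div_mul_ite_coeff_one {K : Type*} [Field K] (w : ℕ → K) (hw : ∀ n, w n ≠ 0) (n k : ℕ) :
    w k / w n * (if k ≤ n then PowerSeries.coeff (n - k) (1 : PowerSeries K) else 0) =
      if n = k then 1 else 0 := by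
  rw [PowerSeries.coeff_one]
  split_ifs <;> first | omega | simp_all

section Triangles

variable {r s t : ℕ → ℂ}

theorem Agm_mul_Btil (ht : ∀ n, t n ≠ 0) {n j : ℕ} (hj : j ≤ n) (k : ℕ) :
    Agm r s t n j * Btil r s t j k =
      r k / r n * if k ≤ j then s (n - j) * signedDets s (j - k) else 0 := by
  unfold Agm Btil signedDets
  rw [if_pos hj]
  split_ifs
  · field_simp [ht j]
  · simp

theorem Btil_mul_Agm (hr : ∀ n, r n ≠ 0) {n j : ℕ} (hj : j ≤ n) (k : ℕ) :
    Btil r s t n j * Agm r s t j k =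
      t k / t n * if k ≤ j then signedDets s (n - j) * s (j - k) else 0 := by
  unfold Agm Btil signedDets
  rw [if_pos hj]
  split_ifs
  · field_simp [hr j]
  · simp

end Triangles

/-- The inverse of the triangle `A(r,s,t)` of generalized means is the triangle `B̃`. -/
theorem stmt4 (r s t : ℕ → ℂ)
    (hr : ∀ n, r n ≠ 0) (ht : ∀ n, t n ≠ 0) (hs : s 0 ≠ 0) :
    (∀ n k : ℕ, ∑ j ∈ Finset.range (n + 1), Agm r s t n j * Btil r s t j k =
      if n = k then 1 else 0) ∧
    (∀ n k : ℕ, ∑ j ∈ Finset.range (n + 1), Btil r s t n j * Agm r s t j k =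
      if n = k then 1 else 0) := by
  have inverse := mk_mul_mk_signedDets s hs
  constructor <;> intro n k
  · rw [sum_congr rfl fun j hj => Agm_mul_Btil ht (Nat.le_of_lt_succ (mem_range.mp hj)) k,
      ← mul_sum, sum_range_ite_mul_eq_coeff_mul, inverse, div_mul_ite_coeff_one r hr]
  · rw [sum_congr rfl fun j hj => Btil_mul_Agm hr (Nat.le_of_lt_succ (mem_range.mp hj)) k,
      ← mul_sum, sum_range_ite_mul_eq_coeff_mul, mul_comm (PowerSeries.mk _), inverse,
      div_mul_ite_coeff_one t ht]
end

section
/- The triangle A(r,s,t;B) = A(r,s,t)·B(u,v) has inverse given by (A(r,s,t;B)^{-1})_{nj} = Σ_{k=j}^n (-1)^{k-j} ((-v)^{n-k}/u^{n-k+1}) (D^{(s)}_{k-j}/t_k) r_j for 0 ≤ j ≤ n, and 0 for j > n. -/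
open Filter Finset Topology

/-- The entries of the triangle `A(r,s,t;B) = A(r,s,t)·B(u,v)`. -/
noncomputable def AgmB (r s t : ℕ → ℂ) (u v : ℂ) (n k : ℕ) : ℂ :=
  if k < n then (s (n - k) * t k * u + s (n - k - 1) * t (k + 1) * v) / r n
  else if k = n then s 0 * t n * u / r n
  else 0

/-- The claimed inverse of `A(r,s,t;B)`:
`(A(r,s,t;B)⁻¹)_{nj} = Σ_{k=j}^n (-1)^{k-j} ((-v)^{n-k}/u^{n-k+1}) (D^{(s)}_{k-j}/t_k) r_j`. -/
noncomputable def CinvB (r t : ℕ → ℂ) (u v : ℂ) (D : ℕ → ℂ) (n j : ℕ) : ℂ :=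
  if j ≤ n then
    ∑ k ∈ Finset.Icc j n,
      (-1 : ℂ) ^ (k - j) * ((-v) ^ (n - k) / u ^ (n - k + 1)) * (D (k - j) / t k) * r j
  else 0

/-!
Model lower-triangular infinite matrices by arrays `ℕ → ℕ → R` multiplied by the truncated
product `∑_{j ≤ n}`. With `T(f)` the Toeplitz matrix of a power series `f`, we have
`A(r,s,t) = diag(1/r) T(∑ s_k X^k) diag(t)` and `B(u,v) = T(u + vX)`, and `T` is multiplicative.
The hypothesis on `D` says `∑ (-1)^k D_k X^k` is the inverse of `∑ s_k X^k`, and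
`u + vX` has inverse `∑ (-v)^k / u^(k+1) X^k`, so `A` and `B` have the explicit two-sided
inverses `A⁻¹ = diag(1/t) T(∑ (-1)^k D_k X^k) diag(r)` and `B⁻¹`; the claimed matrix is
`B⁻¹ A⁻¹`, and associativity of the product of lower-triangular matrices finishes the proof.
-/

open Matrix PowerSeries

variable {R : Type*}

section Semiring

variable [Semiring R]

/-- When `M` is lower triangular this is the matrix product: the terms with `j > n` vanish. -/
def triMul (M N : Matrix ℕ ℕ R) : Matrix ℕ ℕ R :=
  of fun n k => ∑ j ∈ range (n + 1), M n j * N j k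

theorem triMul_apply (M N : Matrix ℕ ℕ R) (n k : ℕ) :
    triMul M N n k = ∑ j ∈ range (n + 1), M n j * N j k := rfl

theorem triMul_of_eq_one_iff {M N : ℕ → ℕ → R} :
    triMul (of M) (of N) = 1 ↔
      ∀ n k, ∑ j ∈ range (n + 1), M n j * N j k = if n = k then 1 else 0 := by
  simp only [← Matrix.ext_iff, triMul_apply, of_apply, one_apply]

theorem one_triMul (M : Matrix ℕ ℕ R) : triMul 1 M = M := by
  ext n k
  rw [triMul_apply, sum_eq_single_of_mem n (self_mem_range_succ n)
    fun j _ hj => by rw [one_apply_ne' hj, zero_mul], one_apply_eq, one_mul]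

theorem triMul_assoc {N : Matrix ℕ ℕ R} (M P : Matrix ℕ ℕ R) (hN : N.IsLowerTriangular) :
    triMul (triMul M N) P = triMul M (triMul N P) := by
  ext n k
  simp only [triMul_apply, sum_mul, mul_sum, mul_assoc]
  rw [sum_comm]
  refine sum_congr rfl fun i hi => ?_
  have hin : i ≤ n := mem_range_succ_iff.1 hi
  refine (sum_subset (range_subset_range.2 (Nat.succ_le_succ hin)) fun j _ hji => ?_).symm
  rw [hN (show i < j from not_le.1 (mt mem_range_succ_iff.2 hji)), zero_mul, mul_zero]

theorem triMul_triMul_eq_one {X X' Y Y' : Matrix ℕ ℕ R} (hX : triMul X X' = 1)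
    (hY : triMul Y Y' = 1) (hYt : Y.IsLowerTriangular) (hY't : Y'.IsLowerTriangular) :
    triMul (triMul X Y) (triMul Y' X') = 1 := by
  rw [triMul_assoc _ _ hYt, ← triMul_assoc _ _ hY't, hY, one_triMul, hX]

def diagScale (a b : ℕ → R) (M : Matrix ℕ ℕ R) : Matrix ℕ ℕ R :=
  of fun n k => a n * M n k * b k

theorem isLowerTriangular_diagScale {M : Matrix ℕ ℕ R} (a b : ℕ → R)
    (hM : M.IsLowerTriangular) : (diagScale a b M).IsLowerTriangular := fun n k h => by
  simp [diagScale, hM h]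

theorem triMul_diagScale {a b c e : ℕ → R} (M N : Matrix ℕ ℕ R) (h : ∀ j, b j * c j = 1) :
    triMul (diagScale a b M) (diagScale c e N) = diagScale a e (triMul M N) := by
  ext n k
  simp only [diagScale, triMul_apply, of_apply, mul_sum, sum_mul]
  refine sum_congr rfl fun j _ => ?_
  calc a n * M n j * b j * (c j * N j k * e k)
      = a n * M n j * (b j * c j) * N j k * e k := by simp only [mul_assoc]
    _ = a n * (M n j * N j k) * e k := by rw [h, mul_one, mul_assoc (a n)]

theorem diagScale_one {a e : ℕ → R} (h : ∀ n, a n * e n = 1) : diagScale a e 1 = 1 := by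
  ext n k
  rcases eq_or_ne n k with rfl | hnk
  · simp [diagScale, h]
  · simp [diagScale, one_apply_ne hnk]

noncomputable def toeplitz (f : R⟦X⟧) : Matrix ℕ ℕ R :=
  of fun n k => if k ≤ n then coeff (n - k) f else 0

theorem toeplitz_apply (f : R⟦X⟧) (n k : ℕ) :
    toeplitz f n k = if k ≤ n then coeff (n - k) f else 0 := rfl

theorem toeplitz_apply_of_lt (f : R⟦X⟧) {n k : ℕ} (h : n < k) : toeplitz f n k = 0 :=
  if_neg (not_le.2 h)

theorem isLowerTriangular_toeplitz (f : R⟦X⟧) : (toeplitz f).IsLowerTriangular :=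
  fun _ _ h => toeplitz_apply_of_lt f h

theorem toeplitz_one : toeplitz (1 : R⟦X⟧) = 1 := by
  ext n k
  rcases lt_trichotomy n k with h | rfl | h
  · simp [toeplitz, one_apply_ne h.ne, not_le.2 h]
  · simp [toeplitz]
  · simp [toeplitz, one_apply_ne h.ne', h.le, coeff_one, Nat.sub_ne_zero_of_lt h]

theorem triMul_toeplitz (f g : R⟦X⟧) : triMul (toeplitz f) (toeplitz g) = toeplitz (f * g) := by
  ext n k
  rcases lt_or_ge n k with h | h
  · rw [triMul_apply, toeplitz_apply_of_lt _ h]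
    refine sum_eq_zero fun j hj => ?_
    rw [toeplitz_apply_of_lt g (lt_of_le_of_lt (mem_range_succ_iff.1 hj) h), mul_zero]
  obtain ⟨d, rfl⟩ := Nat.exists_eq_add_of_le h
  have hlow : ∑ j ∈ range k, toeplitz f (k + d) j * toeplitz g j k = 0 :=
    sum_eq_zero fun j hj => by rw [toeplitz_apply_of_lt g (mem_range.1 hj), mul_zero]
  rw [triMul_apply, add_assoc, sum_range_add, hlow, zero_add, toeplitz_apply,
    if_pos h, Nat.add_sub_cancel_left, coeff_mul, ← Nat.sum_antidiagonal_swap]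
  simp only [Prod.fst_swap, Prod.snd_swap]
  rw [Nat.sum_antidiagonal_eq_sum_range_succ (fun i j => coeff j f * coeff i g)]
  refine sum_congr rfl fun x hx => ?_
  have hxd : x ≤ d := mem_range_succ_iff.1 hx
  simp [toeplitz_apply, hxd, Nat.add_sub_add_left]

theorem triMul_toeplitz_eq_one {f g : R⟦X⟧} (h : f * g = 1) :
    triMul (toeplitz f) (toeplitz g) = 1 := by
  rw [triMul_toeplitz, h, toeplitz_one]

theorem triMul_diagScale_toeplitz_eq_one {a b c e : ℕ → R} {f g : R⟦X⟧} (hfg : f * g = 1)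
    (hbc : ∀ j, b j * c j = 1) (hae : ∀ n, a n * e n = 1) :
    triMul (diagScale a b (toeplitz f)) (diagScale c e (toeplitz g)) = 1 := by
  rw [triMul_diagScale _ _ hbc, triMul_toeplitz_eq_one hfg, diagScale_one hae]

theorem toeplitz_C_add_C_mul_X_apply (u v : R) (j k : ℕ) :
    toeplitz (C u + C v * X) j k = (if j = k then u else 0) + (if j = k + 1 then v else 0) := by
  rcases lt_or_ge j k with h | h
  · rw [toeplitz_apply_of_lt _ h, if_neg h.ne, if_neg (by omega), add_zero]
  obtain ⟨d, rfl⟩ := Nat.exists_eq_add_of_le h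
  rw [toeplitz_apply, if_pos h, Nat.add_sub_cancel_left, map_add, coeff_C, coeff_C_mul, coeff_X]
  simp only [add_eq_left, add_right_inj, mul_ite, mul_one, mul_zero]

theorem triMul_toeplitz_C_add_C_mul_X_apply (M : Matrix ℕ ℕ R) (u v : R) (n k : ℕ) :
    triMul M (toeplitz (C u + C v * X)) n k =
      (if k ≤ n then M n k * u else 0) + (if k + 1 ≤ n then M n (k + 1) * v else 0) := by
  simp only [triMul_apply, toeplitz_C_add_C_mul_X_apply, mul_add, mul_ite, mul_zero,
    sum_add_distrib, sum_ite_eq', mem_range_succ_iff]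

theorem PowerSeries.mk_mul_mk_eq_one {a b : ℕ → R}
    (h : ∀ n, ∑ k ∈ range (n + 1), a k * b (n - k) = if n = 0 then 1 else 0) :
    mk a * mk b = 1 := by
  ext n
  rw [coeff_mul, coeff_one, ← h n,
    Nat.sum_antidiagonal_eq_sum_range_succ (fun i j => coeff i (mk a) * coeff j (mk b))]
  simp only [coeff_mk]

end Semiring

theorem PowerSeries.mk_geometric_mul_C_add_C_mul_X {K : Type*} [Field K] {u : K} (hu : u ≠ 0)
    (v : K) : mk (fun k => (-v) ^ k / u ^ (k + 1)) * (C u + C v * X) = 1 := by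
  ext (_ | n)
  · simp [hu]
  · rw [mul_add, map_add, coeff_mul_C, ← mul_assoc, coeff_succ_mul_X, coeff_mul_C, coeff_one,
      if_neg n.succ_ne_zero, coeff_mk, coeff_mk]
    field_simp
    ring

section Triangles

variable (r s t : ℕ → ℂ) (u v : ℂ) (D : ℕ → ℂ)

noncomputable def triangleA : Matrix ℕ ℕ ℂ :=
  diagScale (fun n => (r n)⁻¹) t (toeplitz (mk s))

noncomputable def triangleAInv : Matrix ℕ ℕ ℂ :=
  diagScale (fun n => (t n)⁻¹) r (toeplitz (mk fun k => (-1) ^ k * D k))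

noncomputable def bandB : Matrix ℕ ℕ ℂ := toeplitz (C u + C v * X)

noncomputable def bandBInv : Matrix ℕ ℕ ℂ := toeplitz (mk fun k => (-v) ^ k / u ^ (k + 1))

theorem of_AgmB : of (AgmB r s t u v) = triMul (triangleA r s t) (bandB u v) := by
  ext n k
  rw [bandB, triMul_toeplitz_C_add_C_mul_X_apply, of_apply, AgmB]
  simp only [triangleA, diagScale, of_apply, toeplitz_apply, coeff_mk]
  rcases lt_trichotomy k n with h | rfl | h
  · have h' : k + 1 ≤ n := h
    simp only [if_pos h, if_pos h.le, if_pos h', Nat.sub_add_eq]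
    ring
  · simp only [lt_irrefl, le_refl, if_true, if_false, Nat.sub_self, Nat.not_succ_le_self]
    ring
  · have h' : ¬ k + 1 ≤ n := by omega
    simp only [if_neg (not_lt.2 h.le), if_neg h.ne', if_neg (not_le.2 h), if_neg h', add_zero]

theorem of_CinvB : of (CinvB r t u v D) = triMul (bandBInv u v) (triangleAInv r t D) := by
  ext n j
  rw [of_apply, CinvB, triMul_apply]
  simp only [bandBInv, triangleAInv, diagScale, of_apply, toeplitz_apply, coeff_mk]
  split_ifs with hjn
  · refine (sum_congr rfl fun k hk => ?_).trans
      (sum_subset (fun k hk => mem_range_succ_iff.2 (mem_Icc.1 hk).2) fun k hk hkj => ?_)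
    · obtain ⟨hjk, hkn⟩ := mem_Icc.1 hk
      rw [if_pos hkn, if_pos hjk]
      ring
    · have hkj : ¬ j ≤ k := fun h => hkj (mem_Icc.2 ⟨h, mem_range_succ_iff.1 hk⟩)
      rw [if_neg hkj, mul_zero, zero_mul, mul_zero]
  · refine (sum_eq_zero fun k hk => ?_).symm
    have hkj : ¬ j ≤ k := fun h => hjn (h.trans (mem_range_succ_iff.1 hk))
    rw [if_neg hkj, mul_zero, zero_mul, mul_zero]

variable {r s t u v D}
variable (hr : ∀ n, r n ≠ 0) (ht : ∀ n, t n ≠ 0)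
  (hD : ∀ n, ∑ k ∈ range (n + 1), (-1 : ℂ) ^ k * D k * s (n - k) = if n = 0 then 1 else 0)
include hr ht hD

theorem triMul_triangleA_triangleAInv : triMul (triangleA r s t) (triangleAInv r t D) = 1 :=
  triMul_diagScale_toeplitz_eq_one (mul_comm (mk s) _ ▸ mk_mul_mk_eq_one hD)
    (fun n => mul_inv_cancel₀ (ht n)) (fun n => inv_mul_cancel₀ (hr n))

theorem triMul_triangleAInv_triangleA : triMul (triangleAInv r t D) (triangleA r s t) = 1 :=
  triMul_diagScale_toeplitz_eq_one (mk_mul_mk_eq_one hD)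
    (fun n => mul_inv_cancel₀ (hr n)) (fun n => inv_mul_cancel₀ (ht n))

end Triangles

theorem triMul_bandB_bandBInv {u : ℂ} (hu : u ≠ 0) (v : ℂ) :
    triMul (bandB u v) (bandBInv u v) = 1 :=
  triMul_toeplitz_eq_one (mul_comm _ (C u + C v * X) ▸ mk_geometric_mul_C_add_C_mul_X hu v)

theorem triMul_bandBInv_bandB {u : ℂ} (hu : u ≠ 0) (v : ℂ) :
    triMul (bandBInv u v) (bandB u v) = 1 :=
  triMul_toeplitz_eq_one (mk_geometric_mul_C_add_C_mul_X hu v)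

theorem stmt5_general (r s t : ℕ → ℂ) (u v : ℂ) (D : ℕ → ℂ)
    (hr : ∀ n, r n ≠ 0) (ht : ∀ n, t n ≠ 0) (hu : u ≠ 0)
    (hD : ∀ n, ∑ k ∈ Finset.range (n + 1), (-1 : ℂ) ^ k * D k * s (n - k) =
      if n = 0 then 1 else 0) :
    (∀ n k : ℕ, ∑ j ∈ Finset.range (n + 1), AgmB r s t u v n j * CinvB r t u v D j k =
      if n = k then 1 else 0) ∧
    (∀ n k : ℕ, ∑ j ∈ Finset.range (n + 1), CinvB r t u v D n j * AgmB r s t u v j k =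
      if n = k then 1 else 0) := by
  have hA_lower : (triangleA r s t).IsLowerTriangular :=
    isLowerTriangular_diagScale _ _ (isLowerTriangular_toeplitz _)
  have hAInv_lower : (triangleAInv r t D).IsLowerTriangular :=
    isLowerTriangular_diagScale _ _ (isLowerTriangular_toeplitz _)
  refine ⟨triMul_of_eq_one_iff.1 ?_, triMul_of_eq_one_iff.1 ?_⟩ <;>
    rw [of_AgmB, of_CinvB]
  · exact triMul_triMul_eq_one (triMul_triangleA_triangleAInv hr ht hD)
      (triMul_bandB_bandBInv hu v) (isLowerTriangular_toeplitz _) (isLowerTriangular_toeplitz _)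
  · exact triMul_triMul_eq_one (triMul_bandBInv_bandB hu v)
      (triMul_triangleAInv_triangleA hr ht hD) hAInv_lower hA_lower

/-- The triangle `A(r,s,t;B)` has the stated inverse, where the `D^{(s)}_k` are the inverse
coefficients of `(s_n)` (i.e. `Σ_{k=0}^n (-1)^k D_k s_{n-k} = δ_{n0}`). -/
theorem stmt5 (r s t : ℕ → ℂ) (u v : ℂ) (D : ℕ → ℂ)
    (hr : ∀ n, r n ≠ 0) (ht : ∀ n, t n ≠ 0) (hs : s 0 ≠ 0) (hu : u ≠ 0) (hv : v ≠ 0)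
    (hD : ∀ n, ∑ k ∈ Finset.range (n + 1), (-1 : ℂ) ^ k * D k * s (n - k) =
      if n = 0 then 1 else 0) :
    (∀ n k : ℕ, ∑ j ∈ Finset.range (n + 1), AgmB r s t u v n j * CinvB r t u v D j k =
      if n = k then 1 else 0) ∧
    (∀ n k : ℕ, ∑ j ∈ Finset.range (n + 1), CinvB r t u v D n j * AgmB r s t u v j k =
      if n = k then 1 else 0) :=
  stmt5_general r s t u v D hr ht hu hD
end

section
/- Let 0 < p_k ≤ 1 for all k. An infinite matrix A = (a_{nk}) maps l(p) into l_∞ if and only if there exists an integer L ≥ 1 such that sup_n sup_k |a_{nk} L^{-1}|^{p_k} < ∞. -/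
/-!
If `sup |a_nk|^p_k = D < ∞`, then `|a_nk x_k| ≤ (D |x_k|^p_k)^(1/p_k)`, and since the numbers
`D |x_k|^p_k` are summable and eventually `≤ 1`, raising them to the powers `1/p_k ≥ 1` keeps them
summable: every row of `A` is dominated by one summable sequence.

Conversely, for nonnegative `c` with `∑ c_k^p_k < ∞`, the map `y ↦ (c_k y_k)` sends `ℓ^∞` into
`l(p)`, so the rows of `A · diag c` are continuous functionals on `ℓ^∞` which are pointwise bounded;
Banach–Steinhaus bounds their norms, hence `|a_nk| c_k`, uniformly. With `c_k = w_k^(1/p_k)` this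
bounds `|a_nk|^p_k w_k` for every summable `w ≥ 0`. That forces `|a_nk|^p_k` itself to be bounded:
otherwise it exceeds `m 2^m` along some sequence of distinct columns `k_m`, and the weight `2^(-m)`
at `k_m` is summable while the products are unbounded.
-/

open Filter Finset Topology
open scoped ENNReal ComplexConjugate

/-- `A ∈ (l(p), l_∞)`. -/
def MapsLpToLInfty (p : ℕ → ℝ) (A : ℕ → ℕ → ℂ) : Prop :=
  ∀ x : ℕ → ℂ, (Summable fun k => ‖x k‖ ^ p k) →
    ∃ Ax : ℕ → ℂ,
      (∀ n, Tendsto (fun m => ∑ k ∈ Finset.range m, A n k * x k) atTop (nhds (Ax n))) ∧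
      BddAbove (Set.range fun n => ‖Ax n‖)

lemma summable_rpow_of_one_le {ι : Type*} {t q : ι → ℝ} (ht : ∀ i, 0 ≤ t i) (hq : ∀ i, 1 ≤ q i)
    (hs : Summable t) : Summable fun i => t i ^ q i := by
  refine .of_norm_bounded_eventually hs ?_
  filter_upwards [hs.tendsto_cofinite_zero.eventually (eventually_le_nhds one_pos)] with i hi
  rw [Real.norm_of_nonneg (Real.rpow_nonneg (ht i) _)]
  exact Real.rpow_le_self_of_le_one (ht i) hi (hq i)

lemma rpow_le_one_add {t q : ℝ} (ht : 0 ≤ t) (hq0 : 0 ≤ q) (hq1 : q ≤ 1) : t ^ q ≤ 1 + t := by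
  rcases le_total t 1 with h | h
  · linarith [Real.rpow_le_one ht h hq0]
  · linarith [Real.rpow_le_self_of_one_le h hq1]

lemma Complex.mul_conj_div_norm (z : ℂ) : z * (conj z / ‖z‖) = ‖z‖ := by
  rcases eq_or_ne z 0 with rfl | hz
  · simp
  · rw [← mul_div_assoc, Complex.mul_conj']
    field_simp

lemma exists_le_of_forall_summable_mul_le {ι : Type*} {g : ι → ℕ → ℝ}
    (h : ∀ w : ℕ → ℝ, (∀ k, 0 ≤ w k) → Summable w → ∃ C, ∀ i k, g i k * w k ≤ C) :
    ∃ C, ∀ i k, g i k ≤ C := by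
  by_contra! hg
  have hfreq : ∀ C, ∃ᶠ k in atTop, ∃ i, C < g i k := by
    intro C
    by_contra! hev
    obtain ⟨K, hK⟩ := eventually_atTop.1 hev
    obtain ⟨C', hC'⟩ := h (fun k => if k < K then 1 else 0) (fun k => by positivity)
      (summable_of_ne_finset_zero (s := range K) fun k hk => by simp_all)
    obtain ⟨i, k, hk⟩ := hg (max C C')
    rcases lt_or_ge k K with hkK | hkK
    · have := hC' i k
      simp only [hkK, if_true, mul_one] at this
      linarith [le_max_right C C']
    · linarith [hK k hkK i, le_max_left C C']
  obtain ⟨φ, hφ, hφg⟩ := extraction_forall_of_frequently fun m : ℕ => hfreq (m * 2 ^ m)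
  choose i hi using hφg
  set w := Function.extend φ (fun m => (1 / 2 : ℝ) ^ m) 0
  have hwφ : ∀ m, w (φ m) = (1 / 2) ^ m := hφ.injective.extend_apply _ _
  have hw0 : ∀ k, 0 ≤ w k := fun k => by
    by_cases hk : ∃ m, φ m = k
    · obtain ⟨m, rfl⟩ := hk
      rw [hwφ]
      positivity
    · exact (Function.extend_apply' _ (0 : ℕ → ℝ) _ hk).ge
  obtain ⟨C, hC⟩ := h w hw0 ((summable_extend_zero hφ.injective).2 summable_geometric_two)
  obtain ⟨m, hm⟩ := exists_nat_gt C
  have hmC := hC (i m) (φ m)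
  rw [hwφ] at hmC
  have : (m : ℝ) < g (i m) (φ m) * (1 / 2) ^ m := by
    have := hi m
    rw [one_div, inv_pow]
    rwa [lt_mul_inv_iff₀ (by positivity)]
  linarith

section LInftyPairing

variable {𝕜 : Type*} [NontriviallyNormedField 𝕜] {b : ℕ → 𝕜}

lemma norm_mul_apply_le (y : lp (fun _ : ℕ => 𝕜) ∞) (k : ℕ) : ‖b k * y k‖ ≤ ‖b k‖ * ‖y‖ := by
  rw [norm_mul]
  gcongr
  exact lp.norm_apply_le_norm ENNReal.top_ne_zero y k

variable [CompleteSpace 𝕜]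

lemma summable_mul_apply (hb : Summable fun k => ‖b k‖) (y : lp (fun _ : ℕ => 𝕜) ∞) :
    Summable fun k => b k * y k :=
  .of_norm_bounded (hb.mul_right ‖y‖) (norm_mul_apply_le y)

noncomputable def lInftyPairing (b : ℕ → 𝕜) (hb : Summable fun k => ‖b k‖) :
    lp (fun _ : ℕ => 𝕜) ∞ →L[𝕜] 𝕜 :=
  LinearMap.mkContinuous
    { toFun := fun y => ∑' k, b k * y k
      map_add' := fun y z => by
        simp only [lp.coeFn_add, Pi.add_apply, mul_add]
        exact (summable_mul_apply hb y).tsum_add (summable_mul_apply hb z)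
      map_smul' := fun c y => by
        simp only [lp.coeFn_smul, Pi.smul_apply, smul_eq_mul, RingHom.id_apply, mul_left_comm _ c]
        exact tsum_mul_left }
    (∑' k, ‖b k‖) fun y =>
      (tsum_of_norm_bounded (hb.mul_right ‖y‖).hasSum (norm_mul_apply_le y)).trans_eq
        tsum_mul_right

lemma lInftyPairing_apply (hb : Summable fun k => ‖b k‖) (y : lp (fun _ : ℕ => 𝕜) ∞) :
    lInftyPairing b hb y = ∑' k, b k * y k := rfl

lemma lInftyPairing_single (hb : Summable fun k => ‖b k‖) (k : ℕ) :
    lInftyPairing b hb (lp.single ∞ k 1) = b k := by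
  rw [lInftyPairing_apply, tsum_eq_single k fun j hj => by simp [hj]]
  simp

end LInftyPairing

lemma mapsLpToLInfty_of_rpow_le {p : ℕ → ℝ} (hp : ∀ k, 0 < p k) (hp1 : ∀ k, p k ≤ 1)
    {A : ℕ → ℕ → ℂ} {D : ℝ} (hA : ∀ n k, ‖A n k‖ ^ p k ≤ D) : MapsLpToLInfty p A := by
  intro x hx
  have hD : 0 ≤ D := (Real.rpow_nonneg (norm_nonneg _) _).trans (hA 0 0)
  set b : ℕ → ℝ := fun k => (D * ‖x k‖ ^ p k) ^ (p k)⁻¹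
  have hb : Summable b := summable_rpow_of_one_le (fun k => by positivity)
    (fun k => (one_le_inv₀ (hp k)).2 (hp1 k)) (hx.mul_left D)
  have hAx : ∀ n k, ‖A n k * x k‖ ≤ b k := fun n k =>
    calc ‖A n k * x k‖ = (‖A n k * x k‖ ^ p k) ^ (p k)⁻¹ :=
          (Real.rpow_rpow_inv (norm_nonneg _) (hp k).ne').symm
      _ ≤ (D * ‖x k‖ ^ p k) ^ (p k)⁻¹ := by
        refine Real.rpow_le_rpow (Real.rpow_nonneg (norm_nonneg _) _) ?_ (inv_nonneg.2 (hp k).le)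
        rw [norm_mul, Real.mul_rpow (norm_nonneg _) (norm_nonneg _)]
        gcongr
        exact hA n k
  refine ⟨fun n => ∑' k, A n k * x k,
    fun n => (Summable.of_norm_bounded hb (hAx n)).hasSum.tendsto_sum_nat, ∑' k, b k, ?_⟩
  rintro _ ⟨n, rfl⟩
  exact tsum_of_norm_bounded hb.hasSum (hAx n)

lemma exists_rpow_le_of_rpow_mul_inv_le {p : ℕ → ℝ} (hp1 : ∀ k, p k ≤ 1) {A : ℕ → ℕ → ℂ} {L : ℕ}
    (hL : 1 ≤ L) {C : ℝ} (hC : ∀ n k, ‖A n k * ((L : ℂ))⁻¹‖ ^ p k ≤ C) :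
    ∃ D, ∀ n k, ‖A n k‖ ^ p k ≤ D := by
  have hL1 : (1 : ℝ) ≤ L := by exact_mod_cast hL
  have hC0 : 0 ≤ C := (Real.rpow_nonneg (norm_nonneg _) _).trans (hC 0 0)
  refine ⟨C * L, fun n k => ?_⟩
  calc ‖A n k‖ ^ p k = ‖A n k * ((L : ℂ))⁻¹‖ ^ p k * (L : ℝ) ^ p k := by
        rw [← Real.mul_rpow (norm_nonneg _) (by positivity), norm_mul, norm_inv,
          Complex.norm_natCast, inv_mul_cancel_right₀ (by positivity)]
    _ ≤ C * L := by
        gcongr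
        · exact hC n k
        · exact Real.rpow_le_self_of_one_le hL1 (hp1 k)

namespace MapsLpToLInfty

variable {p : ℕ → ℝ} {A : ℕ → ℕ → ℂ}

lemma summable_norm_mul (hA : MapsLpToLInfty p A) (hp : ∀ k, 0 ≤ p k) {c : ℕ → ℝ}
    (hc0 : ∀ k, 0 ≤ c k) (hc : Summable fun k => c k ^ p k) (n : ℕ) :
    Summable fun k => ‖A n k‖ * c k := by
  set x : ℕ → ℂ := fun k => c k * (conj (A n k) / ‖A n k‖)
  have hx : ∀ k, ‖x k‖ ≤ c k := fun k => by
    simp only [x, norm_mul, norm_div, Complex.norm_conj, Complex.norm_real, norm_norm,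
      Real.norm_of_nonneg (hc0 k)]
    exact mul_le_of_le_one_right (hc0 k) (div_self_le_one _)
  have hAx : ∀ k, A n k * x k = ((‖A n k‖ * c k : ℝ) : ℂ) := fun k => by
    rw [mul_left_comm, Complex.mul_conj_div_norm]
    push_cast
    ring
  obtain ⟨Ax, hconv, -⟩ := hA x <| hc.of_nonneg_of_le (fun k => Real.rpow_nonneg (norm_nonneg _) _)
    fun k => Real.rpow_le_rpow (norm_nonneg _) (hx k) (hp k)
  have hre := (Complex.continuous_re.tendsto _).comp (hconv n)
  simp only [Function.comp_def, hAx, ← Complex.ofReal_sum, Complex.ofReal_re] at hre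
  exact ((hasSum_iff_tendsto_nat_of_nonneg (fun k => mul_nonneg (norm_nonneg _) (hc0 k)) _).2
    hre).summable

lemma exists_norm_mul_le (hA : MapsLpToLInfty p A) (hp : ∀ k, 0 ≤ p k) (hp1 : ∀ k, p k ≤ 1)
    {c : ℕ → ℝ} (hc0 : ∀ k, 0 ≤ c k) (hc : Summable fun k => c k ^ p k) :
    ∃ C, ∀ n k, ‖A n k‖ * c k ≤ C := by
  have hrow : ∀ n, Summable fun k => ‖A n k * c k‖ := fun n => by
    simpa [Real.norm_of_nonneg (hc0 _)] using hA.summable_norm_mul hp hc0 hc n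
  set g : ℕ → lp (fun _ : ℕ => ℂ) ∞ →L[ℂ] ℂ := fun n => lInftyPairing _ (hrow n)
  have hg : ∀ y, ∃ B, ∀ n, ‖g n y‖ ≤ B := fun y => by
    have hx : Summable fun k => ‖(c k * y k : ℂ)‖ ^ p k := by
      refine (hc.mul_right (1 + ‖y‖)).of_nonneg_of_le (fun k => by positivity) fun k => ?_
      rw [norm_mul, Complex.norm_real, Real.norm_of_nonneg (hc0 k),
        Real.mul_rpow (hc0 k) (norm_nonneg _)]
      refine mul_le_mul_of_nonneg_left ?_ (Real.rpow_nonneg (hc0 k) _)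
      calc ‖y k‖ ^ p k ≤ 1 + ‖y k‖ := rpow_le_one_add (norm_nonneg _) (hp k) (hp1 k)
        _ ≤ 1 + ‖y‖ := by gcongr; exact lp.norm_apply_le_norm ENNReal.top_ne_zero y k
    obtain ⟨Ax, hconv, B, hB⟩ := hA _ hx
    refine ⟨B, fun n => hB ⟨n, ?_⟩⟩
    refine congrArg _ (tendsto_nhds_unique (hconv n) ?_)
    rw [show g n y = ∑' k, A n k * c k * y k from rfl]
    simpa only [mul_assoc] using (summable_mul_apply (hrow n) y).hasSum.tendsto_sum_nat
  obtain ⟨C, hC⟩ := banach_steinhaus hg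
  refine ⟨C, fun n k => ?_⟩
  set e : lp (fun _ : ℕ => ℂ) ∞ := lp.single ∞ k 1
  calc ‖A n k‖ * c k = ‖g n e‖ := by
        rw [lInftyPairing_single, norm_mul, Complex.norm_real, Real.norm_of_nonneg (hc0 k)]
    _ ≤ ‖g n‖ * ‖e‖ := (g n).le_opNorm e
    _ ≤ C := by rw [lp.norm_single ENNReal.zero_lt_top, norm_one, mul_one]; exact hC n

lemma exists_rpow_mul_le (hA : MapsLpToLInfty p A) (hp : ∀ k, 0 < p k) (hp1 : ∀ k, p k ≤ 1)
    {w : ℕ → ℝ} (hw0 : ∀ k, 0 ≤ w k) (hw : Summable w) :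
    ∃ C, ∀ n k, ‖A n k‖ ^ p k * w k ≤ C := by
  have hc : ∀ k, (w k ^ (p k)⁻¹) ^ p k = w k := fun k => Real.rpow_inv_rpow (hw0 k) (hp k).ne'
  obtain ⟨C, hC⟩ := hA.exists_norm_mul_le (c := fun k => w k ^ (p k)⁻¹) (fun k => (hp k).le) hp1
    (fun k => Real.rpow_nonneg (hw0 k) _) (by simpa only [hc] using hw)
  refine ⟨1 + C, fun n k => ?_⟩
  calc ‖A n k‖ ^ p k * w k = (‖A n k‖ * w k ^ (p k)⁻¹) ^ p k := by
        rw [Real.mul_rpow (norm_nonneg _) (Real.rpow_nonneg (hw0 k) _), hc]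
    _ ≤ 1 + ‖A n k‖ * w k ^ (p k)⁻¹ :=
        rpow_le_one_add (mul_nonneg (norm_nonneg _) (Real.rpow_nonneg (hw0 k) _)) (hp k).le (hp1 k)
    _ ≤ 1 + C := by gcongr; exact hC n k

lemma exists_rpow_le (hA : MapsLpToLInfty p A) (hp : ∀ k, 0 < p k) (hp1 : ∀ k, p k ≤ 1) :
    ∃ D, ∀ n k, ‖A n k‖ ^ p k ≤ D :=
  exists_le_of_forall_summable_mul_le fun _ hw0 hw => hA.exists_rpow_mul_le hp hp1 hw0 hw

end MapsLpToLInfty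

/-- Grosse-Erdmann's characterization: for `0 < p_k ≤ 1`, `A ∈ (l(p), l_∞)` iff
`sup_n sup_k |a_{nk} L^{-1}|^{p_k} < ∞` for some integer `L ≥ 1`. -/
theorem stmt8 (p : ℕ → ℝ) (hp : ∀ k, 0 < p k) (hp1 : ∀ k, p k ≤ 1)
    (A : ℕ → ℕ → ℂ) :
    ((∀ x : ℕ → ℂ, (Summable fun k => ‖x k‖ ^ p k) →
      ∃ Ax : ℕ → ℂ,
        (∀ n, Tendsto (fun m => ∑ k ∈ Finset.range m, A n k * x k) atTop (nhds (Ax n))) ∧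
        BddAbove (Set.range fun n => ‖Ax n‖))
    ↔
    (∃ L : ℕ, 1 ≤ L ∧ ∃ C : ℝ,
      ∀ n k : ℕ, ‖A n k * ((L : ℂ))⁻¹‖ ^ p k ≤ C)) := by
  constructor
  · intro hA
    obtain ⟨D, hD⟩ := MapsLpToLInfty.exists_rpow_le hA hp hp1
    exact ⟨1, le_rfl, D, by simpa using hD⟩
  · rintro ⟨L, hL, C, hC⟩
    obtain ⟨D, hD⟩ := exists_rpow_le_of_rpow_mul_inv_le hp1 hL hC
    exact mapsLpToLInfty_of_rpow_le hp hp1 hD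
end

section
/- If x ∈ l(r,s,t,p;B) with y = A(r,s,t;B)x ∈ l(p), and a = (a_k) is any sequence, then for every n, Σ_{k=0}^n a_k x_k = (Ey)_n, where E = (e_{nk}) is the triangle with e_{nk} = r_k [ a_k/(u s_0 t_k) + Σ_{j=k}^{k+1} (-1)^{j-k} (D^{(s)}_{j-k}/t_j) Σ_{l=k+1}^n ((-v)^{l-j}/u^{l-j+1}) a_l + Σ_{j=k+2}^n (-1)^{j-k} (D^{(s)}_{j-k}/t_j) Σ_{l=j}^n ((-v)^{l-j}/u^{l-j+1}) a_l ] for 0 ≤ k ≤ n, e_{nk} = 0 for k > n. -/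
open Filter Finset Topology

/-- The triangle `E = (e_{nk})` associated with a sequence `a`. -/
noncomputable def Emat (s t r : ℕ → ℂ) (u v : ℂ) (D : ℕ → ℂ) (a : ℕ → ℂ) (n k : ℕ) : ℂ :=
  if k ≤ n then
    r k * (a k / (u * s 0 * t k)
      + ∑ j ∈ Finset.Icc k (k + 1), (-1 : ℂ) ^ (j - k) * (D (j - k) / t j) *
          (∑ l ∈ Finset.Icc (k + 1) n, ((-v) ^ (l - j) / u ^ (l - j + 1)) * a l)
      + ∑ j ∈ Finset.Icc (k + 2) n, (-1 : ℂ) ^ (j - k) * (D (j - k) / t j) *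
          (∑ l ∈ Finset.Icc j n, ((-v) ^ (l - j) / u ^ (l - j + 1)) * a l))
  else 0

theorem Finset.sum_range_sum_range_eq_sum_range_sum_Icc {M : Type*} [AddCommMonoid M]
    (f : ℕ → ℕ → M) (n : ℕ) :
    ∑ m ∈ range (n + 1), ∑ k ∈ range (m + 1), f m k =
      ∑ k ∈ range (n + 1), ∑ m ∈ Icc k n, f m k := by
  have h := sum_Ico_Ico_comm 0 (n + 1) fun k m => f m k
  simp only [← range_eq_Ico] at h
  simp only [Ico_add_one_right_eq_Icc] at h
  exact h.symm

theorem PowerSeries.coeff_mk_mul_mk {R : Type*} [CommSemiring R] (f g : ℕ → R) (n : ℕ) :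
    coeff n (mk f * mk g) = ∑ k ∈ range (n + 1), f k * g (n - k) := by
  simp only [coeff_mul, coeff_mk,
    Nat.sum_antidiagonal_eq_sum_range_succ fun i j => f i * g j]

open PowerSeries in
theorem eq_sum_mul_of_convolution_inverse {R : Type*} [CommRing R] {s d c w : ℕ → R}
    (hd : ∀ n, ∑ k ∈ range (n + 1), d k * s (n - k) = if n = 0 then 1 else 0)
    (hw : ∀ n, w n = ∑ k ∈ range (n + 1), c k * s (n - k)) (n : ℕ) :
    c n = ∑ j ∈ range (n + 1), w j * d (n - j) := by
  have hds : mk d * mk s = 1 := by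
    ext n
    rw [coeff_mk_mul_mk, hd, coeff_one]
  have hw : mk w = mk c * mk s := by
    ext n
    rw [coeff_mk, hw, coeff_mk_mul_mk]
  have hc : mk c = mk w * mk d := by
    rw [hw, mul_assoc, mul_comm (mk s), hds, mul_one]
  simpa only [coeff_mk, coeff_mk_mul_mk] using congr_arg (coeff n) hc

section Band

variable {K : Type*} [Field K]

/-- The band matrix `B(u,v)` applied to `x`, with the convention `x_{-1} = 0`. -/
def bandTransform (u v : K) (x : ℕ → K) : ℕ → K
  | 0 => u * x 0
  | k + 1 => u * x (k + 1) + v * x k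

theorem eq_sum_bandTransform {u : K} (hu : u ≠ 0) (v : K) (x : ℕ → K) (m : ℕ) :
    x m = ∑ k ∈ range (m + 1), (-v) ^ (m - k) / u ^ (m - k + 1) * bandTransform u v x k := by
  induction m with
  | zero => simp [bandTransform, hu]
  | succ m ih =>
    have hshift : ∀ k ∈ range (m + 1),
        (-v) ^ (m + 1 - k) / u ^ (m + 1 - k + 1) * bandTransform u v x k =
          (-v / u) * ((-v) ^ (m - k) / u ^ (m - k + 1) * bandTransform u v x k) := by
      intro k hk
      rw [Nat.sub_add_comm (Nat.lt_succ_iff.mp (mem_range.mp hk)), pow_succ, pow_succ]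
      field_simp
    rw [sum_range_succ, sum_congr rfl hshift, ← mul_sum, ← ih, Nat.sub_self, bandTransform]
    field_simp
    ring

theorem sum_mul_eq_sum_bandTransform_mul {u : K} (hu : u ≠ 0) (v : K) (a x : ℕ → K) (n : ℕ) :
    ∑ m ∈ range (n + 1), a m * x m =
      ∑ k ∈ range (n + 1), bandTransform u v x k *
        ∑ m ∈ Icc k n, (-v) ^ (m - k) / u ^ (m - k + 1) * a m := by
  simp_rw [eq_sum_bandTransform hu v x _, mul_sum]
  rw [sum_range_sum_range_eq_sum_range_sum_Icc]
  refine sum_congr rfl fun k _ => sum_congr rfl fun m _ => ?_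
  ring

end Band

theorem mul_GmB_eq_sum (r s t : ℕ → ℂ) (u v : ℂ) (x : ℕ → ℂ) {m : ℕ} (hr : r m ≠ 0) :
    r m * GmB r s t u v x m = ∑ k ∈ range (m + 1), t k * bandTransform u v x k * s (m - k) := by
  -- both sides equal `Σ_{k ≤ m} g k + Σ_{k < m} h k`, split off at opposite ends
  let g k := t k * u * x k * s (m - k)
  let h k := t (k + 1) * v * x k * s (m - (k + 1))
  calc r m * GmB r s t u v x m
      = ∑ k ∈ range m, (g k + h k) + g m := by
        rw [GmB, ← mul_assoc, mul_inv_cancel₀ hr, one_mul]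
        congr 1
        · exact sum_congr rfl fun k _ => by simp only [g, h, Nat.sub_add_eq]; ring
        · simp only [g, Nat.sub_self]; ring
    _ = ∑ k ∈ range m, (g (k + 1) + h k) + g 0 := by
        rw [sum_add_distrib, sum_add_distrib, add_right_comm, ← sum_range_succ,
          add_right_comm, ← sum_range_succ']
    _ = ∑ k ∈ range (m + 1), t k * bandTransform u v x k * s (m - k) := by
        rw [sum_range_succ']
        simp only [g, h, bandTransform]
        congr 1
        · exact sum_congr rfl fun k _ => by ring
        · ring

theorem Emat_eq_sum {s t r D : ℕ → ℂ} (u v : ℂ) (a : ℕ → ℂ) (hD0 : D 0 = (s 0)⁻¹)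
    {n k : ℕ} (hk : k ≤ n) :
    Emat s t r u v D a n k = r k * ∑ j ∈ Icc k n, (-1) ^ (j - k) * (D (j - k) / t j) *
      ∑ l ∈ Icc j n, (-v) ^ (l - j) / u ^ (l - j + 1) * a l := by
  have hsplit : ∀ {i} (f : ℕ → ℂ), i ≤ n → ∑ j ∈ Icc i n, f j = f i + ∑ j ∈ Icc (i + 1) n, f j :=
    fun f hi => by rw [Icc_add_one_left_eq_Ioc, add_sum_Ioc_eq_sum_Icc hi]
  let A (j : ℕ) : ℂ := ∑ l ∈ Icc j n, (-v) ^ (l - j) / u ^ (l - j + 1) * a l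
  let c (j : ℕ) : ℂ := (-1) ^ (j - k) * (D (j - k) / t j)
  have hAk : ∑ l ∈ Icc k n, (-v) ^ (l - k) / u ^ (l - k + 1) * a l =
      a k / u + ∑ l ∈ Icc (k + 1) n, (-v) ^ (l - k) / u ^ (l - k + 1) * a l := by
    rw [hsplit _ hk, Nat.sub_self, pow_zero, zero_add, pow_one, one_div_mul_eq_div]
  have htail : ∑ j ∈ Icc (k + 1) n, c j * A j =
      c (k + 1) * A (k + 1) + ∑ j ∈ Icc (k + 2) n, c j * A j := by
    rcases hk.lt_or_eq with hlt | rfl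
    · exact hsplit _ hlt
    · simp [A]
  -- the paper's `j = k` term together with `a_k / (u s_0 t_k)` is `c k * A k` because `D_0 s_0 = 1`
  rw [Emat, if_pos hk, sum_Icc_succ_top (Nat.le_succ k), Icc_self, sum_singleton, hsplit _ hk,
    htail]
  simp only [A, c]
  rw [hAk]
  simp only [Nat.sub_self, pow_zero, hD0]
  ring

theorem stmt10_general (r s t : ℕ → ℂ) (u v : ℂ) (D : ℕ → ℂ)
    (hr : ∀ n, r n ≠ 0) (ht : ∀ n, t n ≠ 0) (hu : u ≠ 0)
    (hD : ∀ n, ∑ k ∈ Finset.range (n + 1), (-1 : ℂ) ^ k * D k * s (n - k) =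
      if n = 0 then 1 else 0)
    (a : ℕ → ℂ) (x y : ℕ → ℂ)
    (hy : ∀ n, y n = GmB r s t u v x n) :
    ∀ n : ℕ, ∑ k ∈ Finset.range (n + 1), a k * x k =
      ∑ k ∈ Finset.range (n + 1), Emat s t r u v D a n k * y k := by
  intro n
  have hD0 : D 0 = (s 0)⁻¹ := eq_inv_of_mul_eq_one_left (by simpa using hD 0)
  have hz : ∀ k, bandTransform u v x k =
      (t k)⁻¹ * ∑ j ∈ range (k + 1), r j * y j * ((-1) ^ (k - j) * D (k - j)) := fun k => by
    rw [← eq_sum_mul_of_convolution_inverse (c := fun k => t k * bandTransform u v x k)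
      (w := fun j => r j * y j) hD (fun m => by rw [hy, mul_GmB_eq_sum r s t u v x (hr m)]),
      inv_mul_cancel_left₀ (ht k)]
  calc ∑ k ∈ range (n + 1), a k * x k
      = ∑ k ∈ range (n + 1), bandTransform u v x k *
          ∑ m ∈ Icc k n, (-v) ^ (m - k) / u ^ (m - k + 1) * a m :=
        sum_mul_eq_sum_bandTransform_mul hu v a x n
    _ = ∑ k ∈ range (n + 1), ∑ j ∈ range (k + 1), r j * y j * ((-1) ^ (k - j) * (D (k - j) / t k) *
          ∑ m ∈ Icc k n, (-v) ^ (m - k) / u ^ (m - k + 1) * a m) := by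
        refine sum_congr rfl fun k _ => ?_
        rw [hz, mul_assoc, sum_mul, mul_sum]
        refine sum_congr rfl fun j _ => ?_
        ring
    _ = ∑ j ∈ range (n + 1), Emat s t r u v D a n j * y j := by
        rw [sum_range_sum_range_eq_sum_range_sum_Icc]
        refine sum_congr rfl fun j hj => ?_
        rw [Emat_eq_sum u v a hD0 (Nat.lt_succ_iff.mp (mem_range.mp hj)), mul_sum, sum_mul]
        refine sum_congr rfl fun k _ => ?_
        ring

/-- Abel-type summation identity: if `y = A(r,s,t;B)x ∈ l(p)` with `x ∈ l(r,s,t,p;B)`,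
then for every `n`, `Σ_{k=0}^n a_k x_k = (Ey)_n`. -/
theorem stmt10 (r s t : ℕ → ℂ) (u v : ℂ) (D : ℕ → ℂ) (p : ℕ → ℝ)
    (hp : ∀ k, 0 < p k) (hpb : BddAbove (Set.range p))
    (hr : ∀ n, r n ≠ 0) (ht : ∀ n, t n ≠ 0) (hs : s 0 ≠ 0) (hu : u ≠ 0) (hv : v ≠ 0)
    (hD : ∀ n, ∑ k ∈ Finset.range (n + 1), (-1 : ℂ) ^ k * D k * s (n - k) =
      if n = 0 then 1 else 0)
    (a : ℕ → ℂ) (x y : ℕ → ℂ)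
    (hx : Summable fun n => ‖GmB r s t u v x n‖ ^ p n)
    (hy : ∀ n, y n = GmB r s t u v x n) :
    ∀ n : ℕ, ∑ k ∈ Finset.range (n + 1), a k * x k =
      ∑ k ∈ Finset.range (n + 1), Emat s t r u v D a n k * y k :=
  stmt10_general r s t u v D hr ht hu hD a x y hy
end
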